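/- Let ℰ be a coarse structure, A a unital ℰ-filtered C*-algebra, 0 < ε < 1/12, and E ∈ ℰ. Let u be an ε-E-unitary in A. Then there is a continuous path (w_t)_{t∈[0,1]} in M₂(A) with w₀ = diag(u, u*) and w₁ = I₂ (the identity matrix), such that for every t ∈ [0,1], all entries of w_t lie in A_{E+E} and ‖w_t* w_t − 1‖ < 3ε and ‖w_t w_t* − 1‖ < 3ε; that is, diag(u, u*) and I₂ are homotopic as 3ε-2E-unitaries in M₂(A). -/

import Mathlib

/-- The (unique) C*-norm of a square matrix over a C*-algebra `A`: the operator norm of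
the matrix acting on the Hilbert `A`-module `Aⁿ`. -/
noncomputable def matCNorm {A : Type*} [CStarAlgebra A] {n : ℕ}
    (x : Matrix (Fin n) (Fin n) A) : ℝ :=
  sSup {t : ℝ | ∃ v : Fin n → A, ‖∑ j, star (v j) * v j‖ ≤ 1 ∧
    t = Real.sqrt ‖∑ j, star (x.mulVec v j) * x.mulVec v j‖}

/-- An `ℰ`-filtered (unital) C*-algebra structure on `A`: a family of closed linear
subspaces `F E`, monotone in `E`, stable under the involution, satisfying
`F E * F E' ⊆ F (E + E')`, with dense union, and with `1 ∈ F E` for all `E`. -/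
structure CoarseFiltration (ℰ : Type*) [AddCommSemigroup ℰ] [Lattice ℰ]
    (A : Type*) [CStarAlgebra A] where
  F : ℰ → Submodule ℂ A
  closed : ∀ E, IsClosed (F E : Set A)
  mono : ∀ ⦃E E' : ℰ⦄, E ≤ E' → F E ≤ F E'
  star_mem : ∀ E : ℰ, ∀ a ∈ F E, star a ∈ F E
  mul_mem : ∀ E E' : ℰ, ∀ a b : A, a ∈ F E → b ∈ F E' → a * b ∈ F (E + E')
  dense_union : Dense (⋃ E : ℰ, (F E : Set A))
  one_mem : ∀ E : ℰ, (1 : A) ∈ F E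

/-!
For `t ≤ 1/2` take `w_t = diag(u, 1) · R_{πt} diag(1, u*) R_{πt}*` with `R_θ` the rotation
matrix; at `t = 1/2` this is `diag(uu*, 1)`, from which the path runs linearly to `1` through
`diag(1 + s(uu* - 1), 1)`. Call `x` a `δ`-unitary (`IsAlmostUnitary δ x`) if
`‖x*x - 1‖, ‖xx* - 1‖ ≤ δ`. Star homomorphisms between C⋆-algebras (here `diag` and conjugation
by a unitary) preserve `δ`-unitaries, and a product of an `α`- and a `β`-unitary is an
`(α + β + αβ)`-unitary, because `(xy)*(xy) - 1 = y*(x*x - 1)y + (y*y - 1)` and `‖y‖² ≤ 1 + β`.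
A self-adjoint perturbation `1 + h` with `‖h‖ ≤ δ` is a `(2δ + δ²)`-unitary. So if `u` is a
`δ`-unitary with `δ < ε`, every `w_t` is a `(2δ + δ²)`-unitary, and `2δ + δ² < 3ε` as `ε < 1`.
The rotations have scalar entries, so the entries of `w_t` stay in `A_E · A_E ⊆ A_{2E}`.
-/

open scoped Matrix

section

-- `CStarMatrix n n A` is normed only once `A` is ordered; the spectral order is the canonical one.
attribute [local instance] CStarAlgebra.spectralOrder CStarAlgebra.spectralOrderedRing

section MatCNorm

open WithCStarModule

variable {A : Type*} [CStarAlgebra A] {n : ℕ}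

lemma norm_equiv_symm_star (v : Fin n → A) :
    ‖(equiv A (Fin n → A)).symm (star v)‖ = √‖∑ j, star (v j) * v j‖ := by
  simp [pi_norm, inner_def]

lemma toCLM_conjTranspose_equiv_symm_star (x : Matrix (Fin n) (Fin n) A) (v : Fin n → A) :
    CStarMatrix.toCLM (CStarMatrix.ofMatrix xᴴ) ((equiv A (Fin n → A)).symm (star v)) =
      (equiv A (Fin n → A)).symm (star (x *ᵥ v)) := by
  ext j
  simp [CStarMatrix.toCLM_apply, Matrix.vecMul, Matrix.mulVec, dotProduct, star_sum,
    Matrix.conjTranspose_apply, CStarMatrix.ofMatrix_apply]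

/- `CStarMatrix` acts on the left Hilbert module `C⋆ᵐᵒᵈ(A, Fin n → A)` by `vecMul`, whereas
`matCNorm` lets `x` act on columns by `mulVec`; `v ↦ star v` intertwines the two, turning `x` into
`xᴴ = star x`. -/
lemma matCNorm_eq_norm_ofMatrix (x : Matrix (Fin n) (Fin n) A) :
    matCNorm x = ‖CStarMatrix.ofMatrix x‖ := by
  have hnorm (v : Fin n → A) :
      ‖CStarMatrix.toCLM (CStarMatrix.ofMatrix xᴴ) ((equiv A (Fin n → A)).symm (star v))‖ =
        √‖∑ j, star ((x *ᵥ v) j) * (x *ᵥ v) j‖ := by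
    rw [toCLM_conjTranspose_equiv_symm_star, norm_equiv_symm_star]
  have hball (v : Fin n → A) :
      (equiv A (Fin n → A)).symm (star v) ∈ Metric.closedBall 0 1 ↔
        ‖∑ j, star (v j) * v j‖ ≤ 1 := by
    rw [Metric.mem_closedBall, dist_zero_right, norm_equiv_symm_star, Real.sqrt_le_one]
  rw [← norm_star, CStarMatrix.norm_def, ← ContinuousLinearMap.sSup_unitClosedBall_eq_norm]
  unfold matCNorm
  congr 1
  ext t
  constructor
  · rintro ⟨v, hv, rfl⟩
    exact ⟨_, (hball v).2 hv, hnorm v⟩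
  · rintro ⟨w, hw, rfl⟩
    obtain ⟨v, rfl⟩ : ∃ v, (equiv A (Fin n → A)).symm (star v) = w :=
      ⟨star (equiv A _ w), by simp⟩
    exact ⟨v, (hball v).1 hw, hnorm v⟩

end MatCNorm

section AlmostUnitary

variable {B : Type*} [NormedRing B] [StarRing B]

def IsAlmostUnitary (δ : ℝ) (x : B) : Prop :=
  ‖star x * x - 1‖ ≤ δ ∧ ‖x * star x - 1‖ ≤ δ

lemma isAlmostUnitary_star {δ : ℝ} {x : B} (hx : IsAlmostUnitary δ x) :
    IsAlmostUnitary δ (star x) := by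
  simpa only [IsAlmostUnitary, star_star] using hx.symm

lemma isAlmostUnitary_one {δ : ℝ} (hδ : 0 ≤ δ) : IsAlmostUnitary δ (1 : B) := by
  simp [IsAlmostUnitary, hδ]

lemma isAlmostUnitary_one_add {h : B} {δ : ℝ} (hh : IsSelfAdjoint h) (hδ : ‖h‖ ≤ δ) :
    IsAlmostUnitary (2 * δ + δ ^ 2) (1 + h) := by
  have hstar : star (1 + h) = 1 + h := by rw [star_add, star_one, hh.star_eq]
  have hbound : ‖(1 + h) * (1 + h) - 1‖ ≤ 2 * δ + δ ^ 2 :=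
    calc ‖(1 + h) * (1 + h) - 1‖ = ‖2 * h + h * h‖ := by congr 1; noncomm_ring
      _ ≤ 2 * ‖h‖ + ‖h‖ * ‖h‖ := by
        refine (norm_add_le _ _).trans (add_le_add ?_ (norm_mul_le _ _))
        rw [two_mul, two_mul]
        exact norm_add_le _ _
      _ ≤ 2 * δ + δ ^ 2 := by nlinarith [norm_nonneg h]
  rw [IsAlmostUnitary, hstar]
  exact ⟨hbound, hbound⟩

lemma isAlmostUnitary_pi {ι : Type*} [Fintype ι] {B : ι → Type*} [∀ i, NormedRing (B i)]
    [∀ i, StarRing (B i)] {δ : ℝ} (hδ : 0 ≤ δ) {x : ∀ i, B i}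
    (hx : ∀ i, IsAlmostUnitary δ (x i)) : IsAlmostUnitary δ x :=
  ⟨(pi_norm_le_iff_of_nonneg hδ).2 fun i => (hx i).1,
    (pi_norm_le_iff_of_nonneg hδ).2 fun i => (hx i).2⟩

variable [CStarRing B]

lemma sq_norm_le_one_add_norm_star_mul_self_sub_one (y : B) :
    ‖y‖ ^ 2 ≤ 1 + ‖star y * y - 1‖ := by
  rcases subsingleton_or_nontrivial B with hB | hB
  · simp only [Subsingleton.elim y 0, norm_zero]
    nlinarith [norm_nonneg (star (0 : B) * 0 - 1)]
  calc ‖y‖ ^ 2 = ‖1 + (star y * y - 1)‖ := by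
        rw [add_sub_cancel, sq, CStarRing.norm_star_mul_self]
    _ ≤ 1 + ‖star y * y - 1‖ := (norm_add_le _ _).trans_eq (by rw [CStarRing.norm_one])

lemma norm_star_mul_mul_self_sub_one_le (x y : B) :
    ‖star (x * y) * (x * y) - 1‖ ≤
      (1 + ‖star y * y - 1‖) * ‖star x * x - 1‖ + ‖star y * y - 1‖ :=
  calc ‖star (x * y) * (x * y) - 1‖ = ‖star y * (star x * x - 1) * y + (star y * y - 1)‖ := by
        rw [star_mul]; congr 1; noncomm_ring
    _ ≤ ‖y‖ ^ 2 * ‖star x * x - 1‖ + ‖star y * y - 1‖ := by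
        refine (norm_add_le _ _).trans (add_le_add_left ?_ _)
        refine (norm_mul_le _ _).trans ?_
        calc ‖star y * (star x * x - 1)‖ * ‖y‖ ≤ ‖star y‖ * ‖star x * x - 1‖ * ‖y‖ := by
              gcongr; exact norm_mul_le _ _
          _ = ‖y‖ ^ 2 * ‖star x * x - 1‖ := by rw [norm_star]; ring
    _ ≤ (1 + ‖star y * y - 1‖) * ‖star x * x - 1‖ + ‖star y * y - 1‖ := by
        gcongr; exact sq_norm_le_one_add_norm_star_mul_self_sub_one y

lemma IsAlmostUnitary.mul {α β : ℝ} {x y : B} (hx : IsAlmostUnitary α x)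
    (hy : IsAlmostUnitary β y) : IsAlmostUnitary (α + β + α * β) (x * y) := by
  have hα : 0 ≤ α := (norm_nonneg _).trans hx.1
  have hβ : 0 ≤ β := (norm_nonneg _).trans hy.1
  constructor
  · calc ‖star (x * y) * (x * y) - 1‖
          ≤ (1 + ‖star y * y - 1‖) * ‖star x * x - 1‖ + ‖star y * y - 1‖ :=
            norm_star_mul_mul_self_sub_one_le x y
      _ ≤ (1 + β) * α + β := by gcongr; exacts [hy.1, hx.1, hy.1]
      _ = α + β + α * β := by ring
  · have h := norm_star_mul_mul_self_sub_one_le (star y) (star x)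
    simp only [star_mul, star_star] at h ⊢
    calc ‖x * y * (star y * star x) - 1‖
          ≤ (1 + ‖x * star x - 1‖) * ‖y * star y - 1‖ + ‖x * star x - 1‖ := by
            simpa only [mul_assoc] using h
      _ ≤ (1 + α) * β + α := by gcongr; exacts [hx.2, hy.2, hx.2]
      _ = α + β + α * β := by ring

end AlmostUnitary

lemma IsAlmostUnitary.map {B C F : Type*} [CStarAlgebra B] [CStarAlgebra C] [FunLike F B C]
    [AlgHomClass F ℂ B C] [StarHomClass F B C] (φ : F) {δ : ℝ} {x : B}
    (hx : IsAlmostUnitary δ x) : IsAlmostUnitary δ (φ x) := by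
  have h₁ : star (φ x) * φ x - 1 = φ (star x * x - 1) := by simp [map_star]
  have h₂ : φ x * star (φ x) - 1 = φ (x * star x - 1) := by simp [map_star]
  rw [IsAlmostUnitary, h₁, h₂]
  exact ⟨(NonUnitalStarAlgHom.norm_apply_le φ _).trans hx.1,
    (NonUnitalStarAlgHom.norm_apply_le φ _).trans hx.2⟩

section Matrices

variable {A : Type*} [CStarAlgebra A] {n : Type*}

noncomputable def diagonalStarAlgHom [Fintype n] [DecidableEq n] :
    (n → A) →⋆ₐ[ℂ] CStarMatrix n n A :=
  { (CStarMatrix.ofMatrixStarAlgEquiv (n := n) (A := A)).toAlgEquiv.toAlgHom.comp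
      (Matrix.diagonalAlgHom ℂ) with
    map_star' := fun v => (Matrix.diagonal_conjTranspose v).symm }

lemma star_map_algebraMap (M : Matrix n n ℂ) :
    star (M.map (algebraMap ℂ A)) = (star M).map (algebraMap ℂ A) :=
  (Matrix.conjTranspose_map _ fun c => algebraMap_star_comm c).symm

lemma map_algebraMap_mem_unitary [Fintype n] [DecidableEq n] {U : Matrix n n ℂ}
    (hU : U ∈ unitary (Matrix n n ℂ)) :
    U.map (algebraMap ℂ A) ∈ unitary (Matrix n n A) := by
  rw [Unitary.mem_iff] at hU ⊢
  simp only [star_map_algebraMap, ← Matrix.map_mul, hU.1, hU.2]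
  exact ⟨Matrix.map_one _ (map_zero _) (map_one _), Matrix.map_one _ (map_zero _) (map_one _)⟩

lemma map_algebraMap_mul_apply_mem [Fintype n] {S : Submodule ℂ A} (M : Matrix n n ℂ)
    {X : Matrix n n A} (hX : ∀ i j, X i j ∈ S) (i j : n) : (M.map (algebraMap ℂ A) * X) i j ∈ S := by
  rw [Matrix.mul_apply]
  exact S.sum_mem fun k _ => by
    rw [Matrix.map_apply, ← Algebra.smul_def]; exact S.smul_mem _ (hX k j)

lemma mul_map_algebraMap_apply_mem [Fintype n] {S : Submodule ℂ A} (M : Matrix n n ℂ)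
    {X : Matrix n n A} (hX : ∀ i j, X i j ∈ S) (i j : n) : (X * M.map (algebraMap ℂ A)) i j ∈ S := by
  rw [Matrix.mul_apply]
  exact S.sum_mem fun k _ => by
    rw [Matrix.map_apply, ← Algebra.commutes, ← Algebra.smul_def]; exact S.smul_mem _ (hX i k)

lemma diagonal_apply_mem [DecidableEq n] {S : Submodule ℂ A} {d : n → A} (hd : ∀ i, d i ∈ S)
    (i j : n) : Matrix.diagonal d i j ∈ S := by
  rw [Matrix.diagonal_apply]
  split_ifs
  exacts [hd i, S.zero_mem]

lemma isAlmostUnitary_diagonal [Fintype n] [DecidableEq n] {δ : ℝ} (hδ : 0 ≤ δ) {d : n → A}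
    (hd : ∀ i, IsAlmostUnitary δ (d i)) :
    IsAlmostUnitary δ (CStarMatrix.ofMatrix (Matrix.diagonal d)) :=
  (isAlmostUnitary_pi hδ hd).map diagonalStarAlgHom

end Matrices

section Rotation

open Real

noncomputable def rotationMatrix (θ : ℝ) : Matrix (Fin 2) (Fin 2) ℂ :=
  !![(cos θ : ℂ), -(sin θ : ℂ); (sin θ : ℂ), (cos θ : ℂ)]

lemma rotationMatrix_mem_unitaryGroup (θ : ℝ) :
    rotationMatrix θ ∈ Matrix.unitaryGroup (Fin 2) ℂ := by
  rw [Matrix.mem_unitaryGroup_iff]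
  ext i j
  fin_cases i <;> fin_cases j <;>
    simp [rotationMatrix, Matrix.mul_apply, Fin.sum_univ_two, Complex.conj_ofReal,
      -Complex.ofReal_cos, -Complex.ofReal_sin] <;>
    ring_nf <;> norm_cast <;> simp

lemma continuous_rotationMatrix : Continuous rotationMatrix := by
  unfold rotationMatrix
  fun_prop

lemma rotationMatrix_zero : rotationMatrix 0 = 1 := by
  rw [rotationMatrix, Matrix.one_fin_two]; simp

lemma rotationMatrix_pi_div_two : rotationMatrix (π / 2) = !![0, -1; 1, 0] := by
  simp [rotationMatrix]

variable {A : Type*} [CStarAlgebra A]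

noncomputable def conjRotation (θ : ℝ) (X : Matrix (Fin 2) (Fin 2) A) : Matrix (Fin 2) (Fin 2) A :=
  (rotationMatrix θ).map (algebraMap ℂ A) * X * star ((rotationMatrix θ).map (algebraMap ℂ A))

lemma conjRotation_zero (X : Matrix (Fin 2) (Fin 2) A) : conjRotation 0 X = X := by
  simp [conjRotation, rotationMatrix_zero, Matrix.map_one]

lemma conjRotation_pi_div_two_diagonal (d : Fin 2 → A) :
    conjRotation (π / 2) (Matrix.diagonal d) = Matrix.diagonal ![d 1, d 0] := by
  rw [conjRotation, rotationMatrix_pi_div_two]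
  ext i j
  fin_cases i <;> fin_cases j <;> simp [Matrix.mul_apply, Fin.sum_univ_two]

lemma continuous_conjRotation (X : Matrix (Fin 2) (Fin 2) A) :
    Continuous fun θ => conjRotation θ X := by
  have h : Continuous fun θ => (rotationMatrix θ).map (algebraMap ℂ A) :=
    continuous_rotationMatrix.matrix_map (continuous_algebraMap ℂ A)
  exact (h.mul continuous_const).mul h.star

lemma isAlmostUnitary_conjRotation {δ : ℝ} (θ : ℝ) {X : Matrix (Fin 2) (Fin 2) A}
    (hX : IsAlmostUnitary δ (CStarMatrix.ofMatrix X)) :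
    IsAlmostUnitary δ (CStarMatrix.ofMatrix (conjRotation θ X)) :=
  let R : unitary (CStarMatrix (Fin 2) (Fin 2) A) :=
    ⟨_, Unitary.map_mem CStarMatrix.ofMatrixStarAlgEquiv
      (map_algebraMap_mem_unitary (rotationMatrix_mem_unitaryGroup θ))⟩
  hX.map (Unitary.conjStarAlgAut ℂ _ R)

lemma conjRotation_apply_mem {S : Submodule ℂ A} (θ : ℝ) {X : Matrix (Fin 2) (Fin 2) A}
    (hX : ∀ i j, X i j ∈ S) (i j : Fin 2) : conjRotation θ X i j ∈ S := by
  rw [conjRotation, star_map_algebraMap]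
  exact mul_map_algebraMap_apply_mem _ (map_algebraMap_mul_apply_mem _ hX) i j

end Rotation

section WhiteheadPath

open Real Matrix

variable {A : Type*} [CStarAlgebra A]

noncomputable def whiteheadPath (u : A) (t : ℝ) : Matrix (Fin 2) (Fin 2) A :=
  if t ≤ 1 / 2 then diagonal ![u, 1] * conjRotation (π * t) (diagonal ![1, star u])
  else diagonal ![1 + (2 - 2 * t) • (u * star u - 1), 1]

lemma whiteheadPath_zero (u : A) : whiteheadPath u 0 = !![u, 0; 0, star u] := by
  rw [whiteheadPath, if_pos (by norm_num), mul_zero, conjRotation_zero, diagonal_mul_diagonal,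
    ← diagonal_vec2]
  congr 1
  ext i
  fin_cases i <;> simp

lemma whiteheadPath_one (u : A) : whiteheadPath u 1 = 1 := by
  rw [whiteheadPath, if_neg (by norm_num)]
  ext i j
  fin_cases i <;> fin_cases j <;> simp

lemma continuous_whiteheadPath (u : A) : Continuous (whiteheadPath u) := by
  refine Continuous.if_le ?_ ?_ continuous_id continuous_const fun t ht => ?_
  · exact continuous_const.mul
      ((continuous_conjRotation _).comp (continuous_const.mul continuous_id))
  · fun_prop
  · rw [ht, mul_one_div, conjRotation_pi_div_two_diagonal, diagonal_mul_diagonal]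
    congr 1
    ext i
    fin_cases i <;> norm_num

lemma isAlmostUnitary_whiteheadPath {δ : ℝ} {u : A} (hu : IsAlmostUnitary δ u) {t : ℝ}
    (ht : t ∈ Set.Icc (0 : ℝ) 1) :
    IsAlmostUnitary (2 * δ + δ ^ 2) (CStarMatrix.ofMatrix (whiteheadPath u t)) := by
  have hδ : 0 ≤ δ := (norm_nonneg _).trans hu.1
  unfold whiteheadPath
  split_ifs with hhalf
  · have h := (isAlmostUnitary_diagonal hδ (d := ![u, 1])
      (Fin.forall_fin_two.2 ⟨hu, isAlmostUnitary_one hδ⟩)).mul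
      (isAlmostUnitary_conjRotation (π * t) (isAlmostUnitary_diagonal hδ (d := ![1, star u])
        (Fin.forall_fin_two.2 ⟨isAlmostUnitary_one hδ, isAlmostUnitary_star hu⟩)))
    rwa [← two_mul, ← sq] at h
  · have hs : |2 - 2 * t| ≤ 1 := abs_le.2 ⟨by linarith [ht.2], by linarith⟩
    refine isAlmostUnitary_diagonal (by positivity)
      (Fin.forall_fin_two.2 ⟨isAlmostUnitary_one_add ?_ ?_, isAlmostUnitary_one (by positivity)⟩)
    · exact (IsSelfAdjoint.all _).smul ((IsSelfAdjoint.mul_star_self u).sub (.one A))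
    · rw [norm_smul, Real.norm_eq_abs]
      exact (mul_le_of_le_one_left (norm_nonneg _) hs).trans hu.2

lemma whiteheadPath_apply_mem {ℰ : Type*} [AddCommSemigroup ℰ] [Lattice ℰ]
    (Φ : CoarseFiltration ℰ A) {E : ℰ} {u : A} (hu : u ∈ Φ.F E) (t : ℝ) (i j : Fin 2) :
    whiteheadPath u t i j ∈ Φ.F (E + E) := by
  unfold whiteheadPath
  split_ifs
  · rw [diagonal_mul]
    refine Φ.mul_mem _ _ _ _ ?_ (conjRotation_apply_mem _ (diagonal_apply_mem ?_) i j)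
    · fin_cases i
      exacts [hu, Φ.one_mem E]
    · exact Fin.forall_fin_two.2 ⟨Φ.one_mem E, Φ.star_mem E u hu⟩
  · have ha : u * star u - 1 ∈ Φ.F (E + E) :=
      sub_mem (Φ.mul_mem _ _ _ _ hu (Φ.star_mem E u hu)) (Φ.one_mem _)
    apply diagonal_apply_mem
    exact Fin.forall_fin_two.2
      ⟨add_mem (Φ.one_mem _) (Submodule.smul_of_tower_mem _ _ ha), Φ.one_mem _⟩

end WhiteheadPath

end

theorem stmt_8_general {ℰ : Type*} [AddCommSemigroup ℰ] [Lattice ℰ]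
    {A : Type*} [CStarAlgebra A] (Φ : CoarseFiltration ℰ A)
    (ε : ℝ) (hε : ε < 1 / 12) (E : ℰ)
    (u : A)
    (huF : u ∈ Φ.F E) (hu1 : ‖star u * u - 1‖ < ε) (hu2 : ‖u * star u - 1‖ < ε) :
    ∃ w : ℝ → Matrix (Fin 2) (Fin 2) A,
      ContinuousOn w (Set.Icc 0 1) ∧
      w 0 = !![u, 0; 0, star u] ∧ w 1 = 1 ∧
      ∀ t ∈ Set.Icc (0 : ℝ) 1,
        (∀ i j, w t i j ∈ Φ.F (E + E)) ∧
        matCNorm (star (w t) * w t - 1) < 3 * ε ∧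
        matCNorm (w t * star (w t) - 1) < 3 * ε := by
  set δ := max ‖star u * u - 1‖ ‖u * star u - 1‖
  have hu : IsAlmostUnitary δ u := ⟨le_max_left _ _, le_max_right _ _⟩
  have hδε : 2 * δ + δ ^ 2 < 3 * ε := by
    have hδ : 0 ≤ δ := (norm_nonneg _).trans hu.1
    nlinarith [max_lt hu1 hu2]
  refine ⟨whiteheadPath u, (continuous_whiteheadPath u).continuousOn, whiteheadPath_zero u,
    whiteheadPath_one u, fun t ht => ⟨whiteheadPath_apply_mem Φ huF t, ?_, ?_⟩⟩
  · rw [matCNorm_eq_norm_ofMatrix]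
    exact (isAlmostUnitary_whiteheadPath hu ht).1.trans_lt hδε
  · rw [matCNorm_eq_norm_ofMatrix]
    exact (isAlmostUnitary_whiteheadPath hu ht).2.trans_lt hδε

/-- Let `ℰ` be a coarse structure (a lattice-ordered abelian semigroup
with monotone addition), `A` a unital `ℰ`-filtered C*-algebra, `0 < ε < 1/12` and
`E ∈ ℰ`. If `u` is an `ε`-`E`-unitary in `A`, then `diag(u, u*)` and `I₂` are homotopic
as `3ε`-`2E`-unitaries in `M₂(A)` (matrix algebras being equipped with their unique
C*-norm `matCNorm`). -/
theorem stmt_8 {ℰ : Type*} [AddCommSemigroup ℰ] [Lattice ℰ]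
    [CovariantClass ℰ ℰ (· + ·) (· ≤ ·)]
    [CovariantClass ℰ ℰ (Function.swap (· + ·)) (· ≤ ·)]
    {A : Type*} [CStarAlgebra A] (Φ : CoarseFiltration ℰ A)
    (ε : ℝ) (hε0 : 0 < ε) (hε : ε < 1 / 12) (E : ℰ)
    (u : A)
    (huF : u ∈ Φ.F E) (hu1 : ‖star u * u - 1‖ < ε) (hu2 : ‖u * star u - 1‖ < ε) :
    ∃ w : ℝ → Matrix (Fin 2) (Fin 2) A,
      ContinuousOn w (Set.Icc 0 1) ∧
      w 0 = !![u, 0; 0, star u] ∧ w 1 = 1 ∧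
      ∀ t ∈ Set.Icc (0 : ℝ) 1,
        (∀ i j, w t i j ∈ Φ.F (E + E)) ∧
        matCNorm (star (w t) * w t - 1) < 3 * ε ∧
        matCNorm (w t * star (w t) - 1) < 3 * ε :=
  stmt_8_general Φ ε hε E u huF hu1 hu2
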